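/- arXiv:1812.03212 — 2 statements merged into one kernel-verified Lean document; each statement's English description precedes it below -/
import Mathlib

section
/- For every n ≥ 2 and every k with 1 ≤ k ≤ 2^(n-1), let x_k = 2^(n-1) + k - 1 and v_k = Λ_n(x_k). Then (k-1)·2^(C(n-1,2)) ≤ v_k < k·2^(C(n-1,2)). -/
/-! Splitting off the leading bit `b_1`, the pairs `(1, j)` fill the top `n - 1` bits of `Λ_n(x)`
and the remaining pairs form `Λ_{n-1}(x mod 2^(n-1))`, which is `< 2^C(n-1,2)`. So
`Λ_n(x) = r · 2^C(n-1,2) + Λ_{n-1}(x mod 2^(n-1))`, where `r` has bits `[b_1 = b_j]`.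
When `b_1 = 1` these bits are just the `b_j`, so `r = x mod 2^(n-1)`, which is `k - 1` for
`x = 2^(n-1) + k - 1`. -/

/-- `concEnc n x` is `Λ_n(x)`: the natural number whose `C(n,2)`-bit binary
representation is the concurrence vector `λ(x_[n])` of the `n`-bit binary
representation `(b_1, …, b_n)` of `x` (with `b_1` most significant).
The bit for the pair `(i,j)`, `1 ≤ i < j ≤ n`, equals `1` iff `b_i = b_j`;
pairs are ordered `(1,2),(1,3),…,(1,n),(2,3),…,(n-1,n)` with `(1,2)` the most
significant bit. -/
def concEnc (n x : ℕ) : ℕ :=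
  ∑ i ∈ Finset.Icc 1 n, ∑ j ∈ Finset.Icc (i + 1) n,
    if x.testBit (n - i) = x.testBit (n - j)
    then 2 ^ (n.choose 2 - 1 - ((i - 1) * (2 * n - i) / 2 + (j - i - 1)))
    else 0

open Finset

theorem Nat.sum_range_ite_testBit (x n : ℕ) :
    ∑ t ∈ range n, (if x.testBit t then 2 ^ t else 0) = x % 2 ^ n := by
  rw [← sum_filter, ← sum_toFinset_bitIndices_two_pow (x % 2 ^ n)]
  congr 1
  ext t
  simp [Nat.testBit_mod_two_pow]

lemma sum_range_ite_two_pow_lt (p : ℕ → Prop) [DecidablePred p] (n : ℕ) :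
    ∑ t ∈ range n, (if p t then 2 ^ t else 0) < 2 ^ n := by
  rw [← sum_filter]
  exact Nat.geomSum_lt le_rfl fun t ht => mem_range.1 (mem_of_mem_filter t ht)

lemma Nat.choose_two_succ (n : ℕ) : (n + 1).choose 2 = n.choose 2 + n := by
  rw [Nat.choose_succ_succ', Nat.choose_one_right, add_comm]

def concTerm (n x i j : ℕ) : ℕ :=
  if x.testBit (n - i) = x.testBit (n - j)
  then 2 ^ (n.choose 2 - 1 - ((i - 1) * (2 * n - i) / 2 + (j - i - 1)))
  else 0

lemma concEnc_eq_sum_concTerm (n x : ℕ) :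
    concEnc n x = ∑ i ∈ Icc 1 n, ∑ j ∈ Icc (i + 1) n, concTerm n x i j := rfl

/-- The pairs `(1, j)` of `λ(x_[n+1])`, read as an `n`-bit number. -/
def concRow (n x : ℕ) : ℕ :=
  ∑ t ∈ range n, if x.testBit n = x.testBit t then 2 ^ t else 0

lemma concRow_lt (n x : ℕ) : concRow n x < 2 ^ n :=
  sum_range_ite_two_pow_lt _ n

lemma concRow_of_testBit (n : ℕ) {x : ℕ} (hx : x.testBit n) : concRow n x = x % 2 ^ n := by
  simp only [concRow, hx, eq_comm (a := true), Nat.sum_range_ite_testBit]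

lemma concTerm_succ_one (n x : ℕ) {j : ℕ} (hj : 2 ≤ j) (hjn : j ≤ n + 1) :
    concTerm (n + 1) x 1 j =
      (if x.testBit n = x.testBit (n + 1 - j) then 2 ^ (n + 1 - j) else 0) * 2 ^ n.choose 2 := by
  have hexp : (n + 1).choose 2 - 1 - ((1 - 1) * (2 * (n + 1) - 1) / 2 + (j - 1 - 1))
      = n + 1 - j + n.choose 2 := by
    rw [Nat.choose_two_succ]; omega
  rw [concTerm, hexp, ite_mul, zero_mul, pow_add, Nat.add_sub_cancel]

/-- Row `i + 1` of `λ(x_[n+1])` starts `n` positions after row `i` of `λ(x_[n])`. -/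
lemma row_offset_succ {n i : ℕ} (hi : 1 ≤ i) (hin : i ≤ n) :
    i * (2 * (n + 1) - (i + 1)) / 2 = (i - 1) * (2 * n - i) / 2 + n := by
  obtain ⟨a, rfl⟩ : ∃ a, i = a + 1 := ⟨i - 1, by omega⟩
  obtain ⟨b, rfl⟩ : ∃ b, n = a + 1 + b := ⟨n - (a + 1), by omega⟩
  have hsub₁ : 2 * (a + 1 + b + 1) - (a + 1 + 1) = a + 2 * b + 2 := by omega
  have hsub₂ : 2 * (a + 1 + b) - (a + 1) = a + 2 * b + 1 := by omega
  have hexpand : (a + 1) * (a + 2 * b + 2) = a * (a + 2 * b + 1) + 2 * (a + 1 + b) := by ring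
  rw [hsub₁, hsub₂, Nat.add_sub_cancel, hexpand, Nat.add_mul_div_left _ _ two_pos]

lemma concTerm_succ_succ (n x : ℕ) {i j : ℕ} (hi : 1 ≤ i) (hij : i < j) (hjn : j ≤ n) :
    concTerm (n + 1) x (i + 1) (j + 1) = concTerm n (x % 2 ^ n) i j := by
  have hbit : ∀ t ≤ n, t ≠ 0 →
      (x % 2 ^ n).testBit (n - t) = x.testBit (n + 1 - (t + 1)) := by
    intro t htn ht
    rw [Nat.testBit_mod_two_pow, decide_eq_true (by omega), Bool.true_and, Nat.add_sub_add_right]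
  have hexp : (n + 1).choose 2 - 1
        - ((i + 1 - 1) * (2 * (n + 1) - (i + 1)) / 2 + (j + 1 - (i + 1) - 1))
      = n.choose 2 - 1 - ((i - 1) * (2 * n - i) / 2 + (j - i - 1)) := by
    have hpos : 0 < n.choose 2 := Nat.choose_pos (by omega)
    rw [Nat.add_sub_cancel, row_offset_succ hi (by omega), Nat.choose_two_succ]
    omega
  rw [concTerm, concTerm, hexp, hbit i (by omega) (by omega), hbit j hjn (by omega)]

lemma sum_concTerm_succ_one (n x : ℕ) :
    ∑ j ∈ Icc 2 (n + 1), concTerm (n + 1) x 1 j = concRow n x * 2 ^ n.choose 2 := by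
  rw [concRow, sum_mul]
  refine sum_nbij' (fun j => n + 1 - j) (fun t => n + 1 - t) ?_ ?_ ?_ ?_ ?_
  · intro j hj; simp only [mem_Icc] at hj; simp only [mem_range]; omega
  · intro t ht; simp only [mem_range] at ht; simp only [mem_Icc]; omega
  · intro j hj; simp only [mem_Icc] at hj; omega
  · intro t ht; simp only [mem_range] at ht; omega
  · intro j hj
    simp only [mem_Icc] at hj
    exact concTerm_succ_one n x hj.1 hj.2

lemma concEnc_succ (n x : ℕ) :
    concEnc (n + 1) x = concRow n x * 2 ^ n.choose 2 + concEnc n (x % 2 ^ n) := by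
  have hrows : Icc 1 (n + 1) = insert 1 (Icc 2 (n + 1)) := by
    ext i; simp only [mem_insert, mem_Icc]; omega
  rw [concEnc_eq_sum_concTerm, hrows, sum_insert (by simp), sum_concTerm_succ_one,
    concEnc_eq_sum_concTerm, ← map_add_right_Icc 1 n 1, sum_map]
  congr 1
  refine sum_congr rfl fun i hi => ?_
  rw [mem_Icc] at hi
  rw [addRightEmbedding_apply, ← map_add_right_Icc (i + 1) n 1, sum_map]
  refine sum_congr rfl fun j hj => ?_
  rw [mem_Icc] at hj
  exact concTerm_succ_succ n x hi.1 (by omega) hj.2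

lemma concEnc_lt (n x : ℕ) : concEnc n x < 2 ^ n.choose 2 := by
  induction n generalizing x with
  | zero => simp [concEnc]
  | succ n ih =>
    calc concEnc (n + 1) x
        = concRow n x * 2 ^ n.choose 2 + concEnc n (x % 2 ^ n) := concEnc_succ n x
      _ < (concRow n x + 1) * 2 ^ n.choose 2 := by
          rw [add_one_mul]; exact Nat.add_lt_add_left (ih _) _
      _ ≤ 2 ^ n * 2 ^ n.choose 2 := Nat.mul_le_mul_right _ (concRow_lt n x)
      _ = 2 ^ (n + 1).choose 2 := by rw [Nat.choose_two_succ, ← pow_add, add_comm]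

/-- For `n ≥ 2` and `1 ≤ k ≤ 2^(n-1)`, with `v_k = Λ_n(2^(n-1)+k-1)`,
one has `(k-1)·2^C(n-1,2) ≤ v_k < k·2^C(n-1,2)`. -/
theorem stmt_2 (n k : ℕ) (hn : 2 ≤ n) (hk1 : 1 ≤ k) (hk2 : k ≤ 2 ^ (n - 1)) :
    (k - 1) * 2 ^ ((n - 1).choose 2) ≤ concEnc n (2 ^ (n - 1) + k - 1) ∧
    concEnc n (2 ^ (n - 1) + k - 1) < k * 2 ^ ((n - 1).choose 2) := by
  obtain ⟨m, rfl⟩ : ∃ m, n = m + 1 := ⟨n - 1, by omega⟩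
  obtain ⟨y, rfl⟩ : ∃ y, k = y + 1 := ⟨k - 1, by omega⟩
  simp only [Nat.add_sub_cancel] at hk2 ⊢
  have hy : y < 2 ^ m := by omega
  have hx : 2 ^ m + (y + 1) - 1 = 2 ^ m + y := by omega
  have hmod : (2 ^ m + y) % 2 ^ m = y := by rw [Nat.add_mod_left, Nat.mod_eq_of_lt hy]
  have htop : (2 ^ m + y).testBit m := by
    rw [Nat.testBit_two_pow_add_eq, Nat.testBit_lt_two_pow hy, Bool.not_false]
  rw [hx, concEnc_succ, concRow_of_testBit m htop, hmod, add_one_mul]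
  exact ⟨Nat.le_add_right _ _, Nat.add_lt_add_left (concEnc_lt m y) _⟩
end

section
/- For every n ≥ 2, the sequence of encoded vertices of 1-CUT(n) is strictly increasing: v_1 < v_2 < ⋯ < v_{2^(n-1)}, where v_k = Λ_n(2^(n-1) + k - 1) for k = 1, …, 2^(n-1). -/
open Finset

lemma Nat.sum_range_ite_testBit_s14 {m z : ℕ} (hz : z < 2 ^ m) :
    ∑ e ∈ range m, (if z.testBit e then 2 ^ e else 0) = z := by
  rw [← sum_filter]
  convert sum_toFinset_bitIndices_two_pow z using 2
  ext e
  simp only [mem_filter, mem_range, List.mem_toFinset, Nat.mem_bitIndices, and_iff_right_iff_imp]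
  intro he
  exact (Nat.pow_lt_pow_iff_right (by norm_num)).1 ((Nat.ge_two_pow_of_testBit he).trans_lt hz)

lemma Nat.choose_two_succ_s14 (m : ℕ) : (m + 1).choose 2 = m.choose 2 + m := by
  simp [Nat.choose_succ_succ', add_comm]

/-- `(i - 1) * (2 * n - i) / 2` counts the pairs in the rows above row `i` of `concEnc n`. -/
lemma rowOffset_succ {i m : ℕ} (hi : 1 ≤ i) (him : i ≤ m) :
    i * (2 * (m + 1) - (i + 1)) / 2 = (i - 1) * (2 * m - i) / 2 + m := by
  have h : i * (2 * (m + 1) - (i + 1)) = (i - 1) * (2 * m - i) + 2 * m := by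
    zify [hi, show i ≤ 2 * m by omega, show i + 1 ≤ 2 * (m + 1) by omega]
    ring
  rw [h, Nat.add_mul_div_left _ _ two_pos]

lemma concEnc_succ_s14 (m y : ℕ) :
    concEnc (m + 1) y =
      (∑ e ∈ range m, if y.testBit m = y.testBit e then 2 ^ (m.choose 2 + e) else 0)
      + concEnc m (y % 2 ^ m) := by
  have hIcc : Icc 1 (m + 1) = insert 1 (Icc 2 (m + 1)) := by
    ext a; simp only [mem_insert, mem_Icc]; omega
  rw [concEnc, hIcc, sum_insert (by simp)]
  congr 1
  · refine sum_nbij' (fun j => m + 1 - j) (fun e => m + 1 - e) ?_ ?_ ?_ ?_ ?_ <;>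
      intro j hj <;> simp only [mem_Icc, mem_range] at hj ⊢ <;> try omega
    rw [Nat.choose_two_succ_s14, Nat.add_sub_cancel]
    congr 2
    omega
  · rw [concEnc, ← map_add_right_Icc 1 m 1, sum_map]
    refine sum_congr rfl fun i hi => ?_
    rw [mem_Icc] at hi
    rw [addRightEmbedding_apply, ← map_add_right_Icc (i + 1) m 1, sum_map]
    refine sum_congr rfl fun j hj => ?_
    rw [mem_Icc] at hj
    simp only [addRightEmbedding_apply, Nat.add_sub_add_right, Nat.add_sub_cancel,
      Nat.testBit_mod_two_pow, show m - i < m by omega, show m - j < m by omega, decide_true,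
      Bool.true_and, rowOffset_succ hi.1 hi.2, Nat.choose_two_succ_s14]
    congr 2
    omega

lemma concEnc_lt_two_pow (m y : ℕ) : concEnc m y < 2 ^ m.choose 2 := by
  induction m generalizing y with
  | zero => simp [concEnc]
  | succ m ih =>
    have hrow : (∑ e ∈ range m, if y.testBit m = y.testBit e then 2 ^ (m.choose 2 + e) else 0)
        ≤ 2 ^ m.choose 2 * ∑ e ∈ range m, 2 ^ e := by
      rw [mul_sum]
      refine sum_le_sum fun e _ => ?_
      split_ifs <;> simp [pow_add]
    have hgeom : ∑ e ∈ range m, 2 ^ e < 2 ^ m := Nat.geomSum_lt le_rfl (by simp)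
    rw [concEnc_succ_s14]
    calc _ < 2 ^ m.choose 2 * ∑ e ∈ range m, 2 ^ e + 2 ^ m.choose 2 :=
          add_lt_add_of_le_of_lt hrow (ih _)
      _ = 2 ^ m.choose 2 * (∑ e ∈ range m, 2 ^ e + 1) := by ring
      _ ≤ 2 ^ m.choose 2 * 2 ^ m := Nat.mul_le_mul_left _ hgeom
      _ = 2 ^ (m + 1).choose 2 := by rw [Nat.choose_two_succ_s14, pow_add]

lemma concEnc_two_pow_add {m z : ℕ} (hz : z < 2 ^ m) :
    concEnc (m + 1) (2 ^ m + z) = 2 ^ m.choose 2 * z + concEnc m z := by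
  rw [concEnc_succ_s14, Nat.add_mod_left, Nat.mod_eq_of_lt hz]
  congr 1
  calc _ = ∑ e ∈ range m, 2 ^ m.choose 2 * (if z.testBit e then 2 ^ e else 0) := by
        refine sum_congr rfl fun e he => ?_
        rw [Nat.testBit_two_pow_add_eq, Nat.testBit_lt_two_pow hz,
          Nat.testBit_two_pow_add_gt (mem_range.1 he)]
        split_ifs <;> simp_all [pow_add]
    _ = 2 ^ m.choose 2 * z := by rw [← mul_sum, Nat.sum_range_ite_testBit_s14 hz]

lemma concEnc_two_pow_add_strictMonoOn (m : ℕ) :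
    StrictMonoOn (fun z => concEnc (m + 1) (2 ^ m + z)) (Set.Iio (2 ^ m)) := by
  intro a ha b hb hab
  simp only [concEnc_two_pow_add ha, concEnc_two_pow_add hb]
  calc 2 ^ m.choose 2 * a + concEnc m a < 2 ^ m.choose 2 * a + 2 ^ m.choose 2 := by
        gcongr; exact concEnc_lt_two_pow m a
    _ = 2 ^ m.choose 2 * (a + 1) := by ring
    _ ≤ 2 ^ m.choose 2 * b := Nat.mul_le_mul_left _ hab
    _ ≤ 2 ^ m.choose 2 * b + concEnc m b := Nat.le_add_right _ _

theorem stmt_14_general (n : ℕ) (k l : ℕ) (hk : 1 ≤ k) (hkl : k < l)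
    (hl : l ≤ 2 ^ (n - 1)) :
    concEnc n (2 ^ (n - 1) + k - 1) < concEnc n (2 ^ (n - 1) + l - 1) := by
  rcases n with _ | m
  · simp only [zero_tsub, pow_zero] at hl
    omega
  rw [Nat.add_sub_cancel] at hl ⊢
  rw [Nat.add_sub_assoc hk, Nat.add_sub_assoc (hk.trans hkl.le)]
  exact concEnc_two_pow_add_strictMonoOn m (Set.mem_Iio.2 (by omega)) (Set.mem_Iio.2 (by omega))
    (by omega)

/-- For `n ≥ 2`, the encoded vertices `v_k = Λ_n(2^(n-1)+k-1)` of `1-CUT(n)`,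
`k = 1, …, 2^(n-1)`, form a strictly increasing sequence. -/
theorem stmt_14 (n : ℕ) (hn : 2 ≤ n) (k l : ℕ) (hk : 1 ≤ k) (hkl : k < l)
    (hl : l ≤ 2 ^ (n - 1)) :
    concEnc n (2 ^ (n - 1) + k - 1) < concEnc n (2 ^ (n - 1) + l - 1) :=
  stmt_14_general n k l hk hkl hl
end
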